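/- arXiv:1411.5095 — 5 statements merged into one kernel-verified Lean document; each statement's English description precedes it below -/
import Mathlib

section
/- Let J : ℝⁿ → ℝ be continuous, nonnegative, symmetric (J(y) = J(-y)), with J(y) ≥ A > 0 on some ball B(0, r₁). Then there exist constants K₁, K₂ > 0 such that for every p ∈ ℝⁿ, ∫ J(y)·exp(-y·p) dy ≥ K₁·exp(K₂·|p|). -/
open MeasureTheory Real Set Filter Metric
open scoped RealInnerProductSpace Topology

/-!
Integrating only over a small ball on which `y` points against `p` already gives the bound: on
`B(-(r₁/2) p/‖p‖, r₁/4)` we have `J ≥ A` and `-⟪y, p⟫ ≥ (r₁/4) ‖p‖`, and this ball has the same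
volume for every `p`.
-/

open NormedSpace

section InnerProductSpace

variable {E : Type*} [NormedAddCommGroup E] [InnerProductSpace ℝ E]

lemma norm_normalize_le_one (x : E) : ‖normalize x‖ ≤ 1 := by
  rcases eq_or_ne x 0 with rfl | hx
  · simp [normalize_zero_eq_zero]
  · exact (norm_normalize_eq_one_iff.mpr hx).le

lemma real_inner_normalize_self (x : E) : ⟪normalize x, x⟫ = ‖x‖ := by
  rcases eq_or_ne x 0 with rfl | hx
  · simp
  · have : ‖x‖ ≠ 0 := norm_ne_zero_iff.mpr hx
    rw [NormedSpace.normalize, real_inner_smul_left, real_inner_self_eq_norm_sq]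
    field_simp

lemma ball_neg_smul_normalize_subset_ball_zero {a : ℝ} (ha : 0 ≤ a) (p : E) (ρ : ℝ) :
    ball (-a • normalize p) ρ ⊆ ball 0 (a + ρ) := by
  refine ball_subset_ball' ?_
  have : ‖normalize p‖ ≤ 1 := norm_normalize_le_one p
  rw [dist_zero_right, norm_smul, norm_neg, Real.norm_of_nonneg ha]
  nlinarith

lemma real_inner_le_of_mem_ball_neg_smul_normalize {a ρ : ℝ} {p y : E}
    (hy : y ∈ ball (-a • normalize p) ρ) : ⟪y, p⟫ ≤ -((a - ρ) * ‖p‖) := by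
  have hcenter : ⟪-a • normalize p, p⟫ = -a * ‖p‖ := by
    rw [real_inner_smul_left, real_inner_normalize_self]
  have hdev : ⟪y - -a • normalize p, p⟫ ≤ ρ * ‖p‖ :=
    (real_inner_le_norm _ _).trans
      (mul_le_mul_of_nonneg_right (mem_ball_iff_norm.mp hy).le (norm_nonneg p))
  rw [inner_sub_left, hcenter] at hdev
  linarith

end InnerProductSpace

theorem stmt2_general (n : ℕ) (J : EuclideanSpace ℝ (Fin n) → ℝ)
    (hJc : Continuous J) (hJnn : ∀ y, 0 ≤ J y)
    (hJsupp : HasCompactSupport J)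
    (A r₁ : ℝ) (hA : 0 < A) (hr₁ : 0 < r₁)
    (hJA : ∀ y, ‖y‖ < r₁ → A ≤ J y) :
    ∃ K₁ > (0:ℝ), ∃ K₂ > (0:ℝ), ∀ p : EuclideanSpace ℝ (Fin n),
      K₁ * Real.exp (K₂ * ‖p‖) ≤ ∫ y, J y * Real.exp (-⟪y, p⟫) := by
  have hvol : 0 < volume.real (ball (0 : EuclideanSpace ℝ (Fin n)) (r₁ / 4)) :=
    ENNReal.toReal_pos (measure_ball_pos _ _ (by positivity)).ne' measure_ball_lt_top.ne
  refine ⟨A * volume.real (ball (0 : EuclideanSpace ℝ (Fin n)) (r₁ / 4)), mul_pos hA hvol,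
    r₁ / 4, by positivity, fun p => ?_⟩
  set S := ball (-(r₁ / 2) • normalize p) (r₁ / 4)
  have hint : Integrable fun y => J y * Real.exp (-⟪y, p⟫) :=
    (hJc.mul (continuous_id.inner continuous_const).neg.rexp).integrable_of_hasCompactSupport
      hJsupp.mul_right
  have hlower : ∀ y ∈ S, A * Real.exp (r₁ / 4 * ‖p‖) ≤ J y * Real.exp (-⟪y, p⟫) := by
    intro y hy
    have hy₀ := ball_neg_smul_normalize_subset_ball_zero (by positivity) p (r₁ / 4) hy
    rw [mem_ball_zero_iff] at hy₀
    have hinner := real_inner_le_of_mem_ball_neg_smul_normalize hy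
    gcongr
    · exact hJnn y
    · exact hJA y (by linarith)
    · linarith
  have hvolS : volume.real S = volume.real (ball (0 : EuclideanSpace ℝ (Fin n)) (r₁ / 4)) := by
    simp only [S, measureReal_def, Measure.addHaar_ball_center]
  calc A * volume.real (ball (0 : EuclideanSpace ℝ (Fin n)) (r₁ / 4)) * Real.exp (r₁ / 4 * ‖p‖)
      = A * Real.exp (r₁ / 4 * ‖p‖) * volume.real S := by rw [hvolS, mul_right_comm]
    _ ≤ ∫ y in S, J y * Real.exp (-⟪y, p⟫) :=
        setIntegral_ge_of_const_le_real measurableSet_ball measure_ball_lt_top.ne hlower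
          hint.integrableOn
    _ ≤ ∫ y, J y * Real.exp (-⟪y, p⟫) :=
        setIntegral_le_integral hint (Eventually.of_forall fun y =>
          mul_nonneg (hJnn y) (Real.exp_nonneg _))

theorem stmt2 (n : ℕ) (J : EuclideanSpace ℝ (Fin n) → ℝ)
    (hJc : Continuous J) (hJnn : ∀ y, 0 ≤ J y)
    (hJsymm : ∀ y, J (-y) = J y)
    (hJsupp : HasCompactSupport J)
    (A r₁ : ℝ) (hA : 0 < A) (hr₁ : 0 < r₁)
    (hJA : ∀ y, ‖y‖ < r₁ → A ≤ J y) :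
    ∃ K₁ > (0:ℝ), ∃ K₂ > (0:ℝ), ∀ p : EuclideanSpace ℝ (Fin n),
      K₁ * Real.exp (K₂ * ‖p‖) ≤ ∫ y, J y * Real.exp (-⟪y, p⟫) :=
  stmt2_general n J hJc hJnn hJsupp A r₁ hA hr₁ hJA
end

section
/- Suppose u, v : ℝⁿ → ℝ are bounded continuous functions, λ > 0, J : ℝⁿ → ℝ is continuous, nonnegative, supported in B(0, r̄), p ∈ ℝⁿ, and c : ℝⁿ → ℝ is bounded continuous. Assume u is a (classical pointwise) subsolution and v a supersolution of λw(z) + J̄ - ∫J(y)e^{-y·p}·exp(w(z-y)-w(z)) dy - c(z) = 0 on ℝⁿ, where J̄ = ∫J. Then u ≤ v on ℝⁿ. -/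
open MeasureTheory Real Set Filter Metric
open scoped RealInnerProductSpace Topology

/-!
Subtracting the two inequalities removes `J̄` and `c`, leaving
`λ (u z - v z) ≤ I u z - I v z` for the nonlocal term `I`. If `u - v` comes within `δ` of its
supremum `M` at `z`, then `u (z - y) - u z ≤ v (z - y) - v z + δ` for every `y`, so
`I u z ≤ e^δ I v z` and hence `λ (M - δ) ≤ (e^δ - 1) sup I v`. Since `v` is bounded, `I v` is
bounded, and letting `δ → 0` gives `M ≤ 0`.
-/

section NonlocalExp

variable {E : Type*} [AddGroup E] [MeasurableSpace E] {μ : Measure E} {K : E → ℝ}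

/-- The theorem applies this with `K y = J y * exp (-⟪y, p⟫)`. -/
noncomputable def nonlocalExp (μ : Measure E) (K w : E → ℝ) (z : E) : ℝ :=
  ∫ y, K y * exp (w (z - y) - w z) ∂μ

lemma integrable_mul_exp_sub [MeasurableSub E] (hK : Integrable K μ) {w : E → ℝ}
    (hw : Measurable w) {B : ℝ} (hB : ∀ x, |w x| ≤ B) (z : E) :
    Integrable (fun y => K y * exp (w (z - y) - w z)) μ := by
  simp_rw [mul_comm (K _)]
  refine hK.bdd_mul (c := exp (2 * B)) ?_ (ae_of_all _ fun y => ?_)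
  · exact ((hw.comp (measurable_const_sub z)).sub_const _).exp.aestronglyMeasurable
  · rw [norm_of_nonneg (exp_pos _).le, exp_le_exp]
    linarith [(abs_le.1 (hB (z - y))).2, (abs_le.1 (hB z)).1]

lemma nonlocalExp_le (hK0 : ∀ y, 0 ≤ K y) (hK : Integrable K μ) {w : E → ℝ} {B : ℝ}
    (hB : ∀ x, |w x| ≤ B) (z : E) :
    nonlocalExp μ K w z ≤ exp (2 * B) * ∫ y, K y ∂μ := by
  rw [nonlocalExp, ← integral_const_mul]
  refine integral_mono_of_nonneg (ae_of_all _ fun y => mul_nonneg (hK0 y) (exp_pos _).le)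
    (hK.const_mul _) (ae_of_all _ fun y => ?_)
  dsimp only
  rw [mul_comm (exp _)]
  refine mul_le_mul_of_nonneg_left (exp_le_exp.2 ?_) (hK0 y)
  linarith [(abs_le.1 (hB (z - y))).2, (abs_le.1 (hB z)).1]

lemma nonlocalExp_le_exp_mul (hK0 : ∀ y, 0 ≤ K y) {u v : E → ℝ} {z : E} {δ : ℝ}
    (hδ : ∀ x, u x - v x ≤ u z - v z + δ)
    (hv : Integrable (fun y => K y * exp (v (z - y) - v z)) μ) :
    nonlocalExp μ K u z ≤ exp δ * nonlocalExp μ K v z := by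
  rw [nonlocalExp, nonlocalExp, ← integral_const_mul]
  refine integral_mono_of_nonneg (ae_of_all _ fun y => mul_nonneg (hK0 y) (exp_pos _).le)
    (hv.const_mul _) (ae_of_all _ fun y => ?_)
  dsimp only
  rw [mul_left_comm, ← exp_add]
  refine mul_le_mul_of_nonneg_left (exp_le_exp.2 ?_) (hK0 y)
  linarith [hδ (z - y)]

lemma mul_sub_le_of_le_nonlocalExp_sub [MeasurableSub E] (hK0 : ∀ y, 0 ≤ K y)
    (hK : Integrable K μ) {lam : ℝ} {u v : E → ℝ} (hv : Measurable v) {B : ℝ}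
    (hB : ∀ x, |v x| ≤ B) {z : E}
    (h : lam * (u z - v z) ≤ nonlocalExp μ K u z - nonlocalExp μ K v z)
    {δ : ℝ} (hδ0 : 0 ≤ δ) (hδ : ∀ x, u x - v x ≤ u z - v z + δ) :
    lam * (u z - v z) ≤ (exp δ - 1) * (exp (2 * B) * ∫ y, K y ∂μ) := by
  have hu := nonlocalExp_le_exp_mul hK0 hδ (integrable_mul_exp_sub hK hv hB z)
  calc lam * (u z - v z) ≤ (exp δ - 1) * nonlocalExp μ K v z := by linarith
    _ ≤ (exp δ - 1) * (exp (2 * B) * ∫ y, K y ∂μ) :=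
      mul_le_mul_of_nonneg_left (nonlocalExp_le hK0 hK hB z) (sub_nonneg.2 (one_le_exp hδ0))

theorem le_of_mul_sub_le_nonlocalExp_sub [MeasurableSub E] (hK0 : ∀ y, 0 ≤ K y)
    (hK : Integrable K μ) {lam : ℝ} (hlam : 0 < lam) {u v : E → ℝ} (hu : BddAbove (range u))
    (hv : Measurable v) {B : ℝ} (hB : ∀ x, |v x| ≤ B)
    (h : ∀ z, lam * (u z - v z) ≤ nonlocalExp μ K u z - nonlocalExp μ K v z) (z : E) :
    u z ≤ v z := by
  set C := exp (2 * B) * ∫ y, K y ∂μ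
  have hC : 0 ≤ C := mul_nonneg (exp_pos _).le (integral_nonneg hK0)
  obtain ⟨A, hA⟩ := hu
  have hbdd : BddAbove (range fun x => u x - v x) := ⟨A + B, by
    rintro _ ⟨x, rfl⟩
    linarith [hA (mem_range_self x), (abs_le.1 (hB x)).1]⟩
  set M := ⨆ x, u x - v x
  have hM : ∀ x, u x - v x ≤ M := le_ciSup hbdd
  have hε : ∀ ε > 0, lam * M ≤ lam * ε + (exp ε - 1) * C := by
    intro ε hε
    obtain ⟨x, hx⟩ := exists_lt_of_lt_ciSup (show M - ε < M by linarith)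
    have hx' := mul_sub_le_of_le_nonlocalExp_sub hK0 hK hv hB (h x) (sub_nonneg.2 (hM x))
      (fun y => by linarith [hM y])
    have hexp : exp (M - (u x - v x)) ≤ exp ε := exp_le_exp.2 (by linarith)
    nlinarith [mul_le_mul_of_nonneg_right hexp hC]
  have hlim : Tendsto (fun ε => lam * ε + (exp ε - 1) * C) (𝓝[>] 0) (𝓝 0) := by
    have : Continuous (fun ε => lam * ε + (exp ε - 1) * C) := by fun_prop
    simpa using (this.tendsto 0).mono_left nhdsWithin_le_nhds
  have hM0 : lam * M ≤ 0 := ge_of_tendsto hlim (eventually_nhdsWithin_of_forall hε)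
  linarith [hM z, nonpos_of_mul_nonpos_right hM0 hlam]

end NonlocalExp

theorem stmt11_general (n : ℕ) (J : EuclideanSpace ℝ (Fin n) → ℝ)
    (hJc : Continuous J) (hJnn : ∀ y, 0 ≤ J y)
    (rbar : ℝ) (hsupp : Function.support J ⊆ Metric.ball (0 : EuclideanSpace ℝ (Fin n)) rbar)
    (Jbar : ℝ)
    (p : EuclideanSpace ℝ (Fin n))
    (c : EuclideanSpace ℝ (Fin n) → ℝ)
    (lam : ℝ) (hlam : 0 < lam)
    (u v : EuclideanSpace ℝ (Fin n) → ℝ)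
    (hub : ∃ B, ∀ z, |u z| ≤ B)
    (hvc : Continuous v) (hvb : ∃ B, ∀ z, |v z| ≤ B)
    (hsub : ∀ z, lam * u z + Jbar -
        (∫ y, J y * Real.exp (-⟪y, p⟫) * Real.exp (u (z - y) - u z)) - c z ≤ 0)
    (hsup : ∀ z, 0 ≤ lam * v z + Jbar -
        (∫ y, J y * Real.exp (-⟪y, p⟫) * Real.exp (v (z - y) - v z)) - c z) :
    ∀ z, u z ≤ v z := by
  obtain ⟨Bu, hBu⟩ := hub
  obtain ⟨Bv, hBv⟩ := hvb
  have hJcs : HasCompactSupport J :=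
    HasCompactSupport.of_support_subset_isCompact (isCompact_closedBall 0 rbar)
      (hsupp.trans ball_subset_closedBall)
  have hK : Integrable (fun y => J y * exp (-⟪y, p⟫)) :=
    (hJc.mul (by fun_prop)).integrable_of_hasCompactSupport hJcs.mul_right
  refine le_of_mul_sub_le_nonlocalExp_sub (fun y => mul_nonneg (hJnn y) (exp_pos _).le) hK hlam
    ⟨Bu, forall_mem_range.2 fun z => (abs_le.1 (hBu z)).2⟩ hvc.measurable hBv fun z => ?_
  rw [nonlocalExp, nonlocalExp]
  linarith [hsub z, hsup z]

theorem stmt11 (n : ℕ) (J : EuclideanSpace ℝ (Fin n) → ℝ)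
    (hJc : Continuous J) (hJnn : ∀ y, 0 ≤ J y)
    (rbar : ℝ) (hsupp : Function.support J ⊆ Metric.ball (0 : EuclideanSpace ℝ (Fin n)) rbar)
    (Jbar : ℝ) (hJbar : Jbar = ∫ y, J y)
    (p : EuclideanSpace ℝ (Fin n))
    (c : EuclideanSpace ℝ (Fin n) → ℝ) (hc : Continuous c) (hcb : ∃ B, ∀ z, |c z| ≤ B)
    (lam : ℝ) (hlam : 0 < lam)
    (u v : EuclideanSpace ℝ (Fin n) → ℝ)
    (huc : Continuous u) (hub : ∃ B, ∀ z, |u z| ≤ B)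
    (hvc : Continuous v) (hvb : ∃ B, ∀ z, |v z| ≤ B)
    (hsub : ∀ z, lam * u z + Jbar -
        (∫ y, J y * Real.exp (-⟪y, p⟫) * Real.exp (u (z - y) - u z)) - c z ≤ 0)
    (hsup : ∀ z, 0 ≤ lam * v z + Jbar -
        (∫ y, J y * Real.exp (-⟪y, p⟫) * Real.exp (v (z - y) - v z)) - c z) :
    ∀ z, u z ≤ v z :=
  stmt11_general n J hJc hJnn rbar hsupp Jbar p c lam hlam u v hub hvc hvb hsub hsup
end

section
/- Suppose for each λ > 0 and q ∈ ℝⁿ, v^λ(·;q) is the unique bounded solution of λv(z) + J̄ - ∫J(y)e^{-y·q}exp(v(z-y)-v(z))dy - c(z) = 0, a comparison principle holds for this equation, and λ·v^λ(z; q) → -H̄(q) uniformly in z as λ → 0 for each q. Then H̄ is concave: for all p₁, p₂ ∈ ℝⁿ, H̄((p₁+p₂)/2) ≥ (H̄(p₁) + H̄(p₂))/2. -/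
open MeasureTheory Real Set Filter Metric
open scoped RealInnerProductSpace Topology

lemma exp_half_add_le (a b : ℝ) :
    Real.exp ((a + b) / 2) ≤ (Real.exp a + Real.exp b) / 2 := by
  have h := two_mul_le_add_sq (Real.exp (a / 2)) (Real.exp (b / 2))
  have h1 : Real.exp (a / 2) * Real.exp (b / 2) = Real.exp ((a + b) / 2) := by
    rw [← Real.exp_add]; ring_nf
  have h2 : Real.exp (a / 2) ^ 2 = Real.exp a := by
    rw [sq, ← Real.exp_add]; ring_nf
  have h3 : Real.exp (b / 2) ^ 2 = Real.exp b := by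
    rw [sq, ← Real.exp_add]; ring_nf
  nlinarith [h, h1, h2, h3]

theorem stmt13 (n : ℕ) (J : EuclideanSpace ℝ (Fin n) → ℝ)
    (hJc : Continuous J) (hJnn : ∀ y, 0 ≤ J y) (hJsupp : HasCompactSupport J)
    (Jbar : ℝ) (hJbar : Jbar = ∫ y, J y)
    (c : EuclideanSpace ℝ (Fin n) → ℝ) (hcc : Continuous c) (hcb : ∃ B, ∀ z, |c z| ≤ B)
    (v : ℝ → EuclideanSpace ℝ (Fin n) → EuclideanSpace ℝ (Fin n) → ℝ)
    (hvc : ∀ lam > (0:ℝ), ∀ q, Continuous (v lam q))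
    (hvb : ∀ lam > (0:ℝ), ∀ q, ∃ B, ∀ z, |v lam q z| ≤ B)
    (hsol : ∀ lam > (0:ℝ), ∀ q z, lam * v lam q z + Jbar -
        (∫ y, J y * Real.exp (-⟪y, q⟫) * Real.exp (v lam q (z - y) - v lam q z)) - c z = 0)
    (hcomp : ∀ lam > (0:ℝ), ∀ q : EuclideanSpace ℝ (Fin n),
      ∀ u w : EuclideanSpace ℝ (Fin n) → ℝ,
      Continuous u → (∃ B, ∀ z, |u z| ≤ B) → Continuous w → (∃ B, ∀ z, |w z| ≤ B) →
      (∀ z, lam * u z + Jbar -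
          (∫ y, J y * Real.exp (-⟪y, q⟫) * Real.exp (u (z - y) - u z)) - c z ≤ 0) →
      (∀ z, 0 ≤ lam * w z + Jbar -
          (∫ y, J y * Real.exp (-⟪y, q⟫) * Real.exp (w (z - y) - w z)) - c z) →
      ∀ z, u z ≤ w z)
    (Hbar : EuclideanSpace ℝ (Fin n) → ℝ)
    (hHbar : ∀ q, TendstoUniformly (fun lam z => lam * v lam q z)
      (fun _ => -Hbar q) (𝓝[>] (0:ℝ))) :
    ∀ p₁ p₂ : EuclideanSpace ℝ (Fin n),
      (Hbar p₁ + Hbar p₂) / 2 ≤ Hbar ((2:ℝ)⁻¹ • (p₁ + p₂)) := by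
  intro p₁ p₂
  set q : EuclideanSpace ℝ (Fin n) := (2:ℝ)⁻¹ • (p₁ + p₂) with hq
  -- integrability of the integrands
  have hint : ∀ lam > (0:ℝ), ∀ (p : EuclideanSpace ℝ (Fin n))
      (w : EuclideanSpace ℝ (Fin n) → ℝ), Continuous w → ∀ z,
      Integrable (fun y => J y * Real.exp (-⟪y, p⟫) * Real.exp (w (z - y) - w z)) := by
    intro lam hlam p w hw z
    have hcont : Continuous (fun y => J y * Real.exp (-⟪y, p⟫) *
        Real.exp (w (z - y) - w z)) := by
      apply ((hJc.mul (Real.continuous_exp.comp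
        ((continuous_id.inner continuous_const).neg))).mul
        (Real.continuous_exp.comp _))
      exact (hw.comp (continuous_const.sub continuous_id)).sub continuous_const
    have hsupp : HasCompactSupport (fun y => J y * Real.exp (-⟪y, p⟫) *
        Real.exp (w (z - y) - w z)) := (hJsupp.mul_right).mul_right
    exact hcont.integrable_of_hasCompactSupport hsupp
  -- the key λ-level inequality at a point
  have key : ∀ lam > (0:ℝ), ∀ z,
      lam * v lam q z ≤ (lam * v lam p₁ z + lam * v lam p₂ z) / 2 := by
    intro lam hlam z
    set w : EuclideanSpace ℝ (Fin n) → ℝ :=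
      fun z => (v lam p₁ z + v lam p₂ z) / 2 with hwdef
    have hwc : Continuous w := ((hvc lam hlam p₁).add (hvc lam hlam p₂)).div_const 2
    have hwb : ∃ B, ∀ z, |w z| ≤ B := by
      obtain ⟨B₁, hB₁⟩ := hvb lam hlam p₁
      obtain ⟨B₂, hB₂⟩ := hvb lam hlam p₂
      refine ⟨(B₁ + B₂) / 2, fun z => ?_⟩
      have := abs_add_le (v lam p₁ z) (v lam p₂ z)
      simp only [hwdef]
      rw [abs_div, abs_two]
      have h1 := hB₁ z; have h2 := hB₂ z
      linarith [abs_add_le (v lam p₁ z) (v lam p₂ z)]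
    have hsub : ∀ z', lam * v lam q z' + Jbar -
        (∫ y, J y * Real.exp (-⟪y, q⟫) *
          Real.exp (v lam q (z' - y) - v lam q z')) - c z' ≤ 0 :=
      fun z' => le_of_eq (hsol lam hlam q z')
    have hsuper : ∀ z', 0 ≤ lam * w z' + Jbar -
        (∫ y, J y * Real.exp (-⟪y, q⟫) *
          Real.exp (w (z' - y) - w z')) - c z' := by
      intro z'
      have hIq : (∫ y, J y * Real.exp (-⟪y, q⟫) * Real.exp (w (z' - y) - w z')) ≤
          ((∫ y, J y * Real.exp (-⟪y, p₁⟫) *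
            Real.exp (v lam p₁ (z' - y) - v lam p₁ z')) +
           (∫ y, J y * Real.exp (-⟪y, p₂⟫) *
            Real.exp (v lam p₂ (z' - y) - v lam p₂ z'))) / 2 := by
        have h1 := hint lam hlam p₁ (v lam p₁) (hvc lam hlam p₁) z'
        have h2 := hint lam hlam p₂ (v lam p₂) (hvc lam hlam p₂) z'
        have hpt : ∀ y, J y * Real.exp (-⟪y, q⟫) * Real.exp (w (z' - y) - w z') ≤
            (J y * Real.exp (-⟪y, p₁⟫) * Real.exp (v lam p₁ (z' - y) - v lam p₁ z') +
             J y * Real.exp (-⟪y, p₂⟫) * Real.exp (v lam p₂ (z' - y) - v lam p₂ z')) / 2 := by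
          intro y
          have hinner : ⟪y, q⟫ = (⟪y, p₁⟫ + ⟪y, p₂⟫) / 2 := by
            simp only [hq, real_inner_smul_right, inner_add_right]
            ring
          set a₁ : ℝ := -⟪y, p₁⟫ + (v lam p₁ (z' - y) - v lam p₁ z') with ha₁
          set a₂ : ℝ := -⟪y, p₂⟫ + (v lam p₂ (z' - y) - v lam p₂ z') with ha₂
          have hlhs : Real.exp (-⟪y, q⟫) * Real.exp (w (z' - y) - w z') =
              Real.exp ((a₁ + a₂) / 2) := by
            rw [← Real.exp_add, hinner]
            congr 1
            simp only [hwdef, ha₁, ha₂]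
            ring
          have hr1 : Real.exp (-⟪y, p₁⟫) *
              Real.exp (v lam p₁ (z' - y) - v lam p₁ z') = Real.exp a₁ := by
            rw [← Real.exp_add]
          have hr2 : Real.exp (-⟪y, p₂⟫) *
              Real.exp (v lam p₂ (z' - y) - v lam p₂ z') = Real.exp a₂ := by
            rw [← Real.exp_add]
          calc J y * Real.exp (-⟪y, q⟫) * Real.exp (w (z' - y) - w z')
              = J y * Real.exp ((a₁ + a₂) / 2) := by rw [mul_assoc, hlhs]
            _ ≤ J y * ((Real.exp a₁ + Real.exp a₂) / 2) :=
                mul_le_mul_of_nonneg_left (exp_half_add_le a₁ a₂) (hJnn y)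
            _ = (J y * Real.exp (-⟪y, p₁⟫) * Real.exp (v lam p₁ (z' - y) - v lam p₁ z') +
                 J y * Real.exp (-⟪y, p₂⟫) * Real.exp (v lam p₂ (z' - y) - v lam p₂ z')) / 2 := by
                rw [mul_assoc, hr1, mul_assoc, hr2]; ring
        calc (∫ y, J y * Real.exp (-⟪y, q⟫) * Real.exp (w (z' - y) - w z'))
            ≤ ∫ y, (J y * Real.exp (-⟪y, p₁⟫) *
                Real.exp (v lam p₁ (z' - y) - v lam p₁ z') +
              J y * Real.exp (-⟪y, p₂⟫) *
                Real.exp (v lam p₂ (z' - y) - v lam p₂ z')) / 2 := by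
              exact integral_mono (hint lam hlam q w hwc z') ((h1.add h2).div_const 2) hpt
          _ = _ := by rw [integral_div, integral_add h1 h2]
      have e₁ := hsol lam hlam p₁ z'
      have e₂ := hsol lam hlam p₂ z'
      simp only [hwdef]
      linarith [hIq]
    have hle := hcomp lam hlam q (v lam q) w (hvc lam hlam q) (hvb lam hlam q)
      hwc hwb hsub hsuper z
    have : v lam q z ≤ (v lam p₁ z + v lam p₂ z) / 2 := hle
    nlinarith [this, hlam]
  -- pass to the limit λ → 0⁺ at z = 0
  have t_q : Tendsto (fun lam => lam * v lam q 0) (𝓝[>] (0:ℝ)) (𝓝 (-Hbar q)) :=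
    (hHbar q).tendsto_at 0
  have t₁ : Tendsto (fun lam => lam * v lam p₁ 0) (𝓝[>] (0:ℝ)) (𝓝 (-Hbar p₁)) :=
    (hHbar p₁).tendsto_at 0
  have t₂ : Tendsto (fun lam => lam * v lam p₂ 0) (𝓝[>] (0:ℝ)) (𝓝 (-Hbar p₂)) :=
    (hHbar p₂).tendsto_at 0
  have t_avg : Tendsto (fun lam => (lam * v lam p₁ 0 + lam * v lam p₂ 0) / 2)
      (𝓝[>] (0:ℝ)) (𝓝 ((-Hbar p₁ + -Hbar p₂) / 2)) := (t₁.add t₂).div_const 2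
  have hev : ∀ᶠ lam in (𝓝[>] (0:ℝ)),
      lam * v lam q 0 ≤ (lam * v lam p₁ 0 + lam * v lam p₂ 0) / 2 := by
    filter_upwards [self_mem_nhdsWithin] with lam hlam
    exact key lam hlam 0
  have hlim : -Hbar q ≤ (-Hbar p₁ + -Hbar p₂) / 2 := le_of_tendsto_of_tendsto t_q t_avg hev
  linarith
end

section
/- Under the setup of the approximate cell problem with comparison, there exist constants K₁, K₂, K₃, K₄ > 0 and C₁, C₂ ∈ ℝ such that the effective Hamiltonian satisfies -K₁·exp(K₂|p|) - C₁ ≥ H̄(p) ≥ -K₃·exp(K₄|p|) - C₂ for all p ∈ ℝⁿ. In particular H̄(p) → -∞ as |p| → ∞. -/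
open MeasureTheory Real Set Filter Metric
open scoped RealInnerProductSpace Topology

/-!
On constants the cell operator only sees the exponential moment `Φ(p) = ∫ J(y) e^{-y·p} dy`, so
by comparison the constants `(Φ(p) - J̄ ∓ sup |c|) / λ` bound `v^λ` from both sides, and in the
limit `|H̄(p) + Φ(p) - J̄| ≤ sup |c|`. Then `Φ(p) ≤ J̄ e^{R|p|}` when `J` is supported in the
ball of radius `R`, and `Φ(p) ≥ A |B(0, r₁/4)| e^{r₁|p|/4}` from a ball of radius `r₁/4`, inside
`B(0, r₁)`, on which `-y·p ≥ r₁|p|/4`.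
-/

lemma exists_norm_le_inner_eq_neg_mul_norm {E : Type*} [NormedAddCommGroup E]
    [InnerProductSpace ℝ E] {s : ℝ} (hs : 0 ≤ s) (p : E) :
    ∃ y₀ : E, ‖y₀‖ ≤ s ∧ ⟪y₀, p⟫ = -(s * ‖p‖) := by
  rcases eq_or_ne p 0 with rfl | hp
  · exact ⟨0, by simpa using hs, by simp⟩
  have hp' : ‖p‖ ≠ 0 := norm_ne_zero_iff.mpr hp
  refine ⟨(-(s / ‖p‖)) • p, ?_, ?_⟩
  · rw [norm_smul, norm_neg, norm_div, norm_norm, Real.norm_of_nonneg hs, div_mul_cancel₀ _ hp']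
  · rw [real_inner_smul_left, real_inner_self_eq_norm_mul_norm]
    field_simp

section ExpMoment

variable {E : Type*} [NormedAddCommGroup E] [InnerProductSpace ℝ E] [MeasurableSpace E]
  [BorelSpace E] {μ : Measure E} {J : E → ℝ}

noncomputable def expMoment (μ : Measure E) (J : E → ℝ) (p : E) : ℝ :=
  ∫ y, J y * exp (-⟪y, p⟫) ∂μ

lemma integrable_mul_exp_neg_inner [IsFiniteMeasureOnCompacts μ] (hJc : Continuous J)
    (hJsupp : HasCompactSupport J) (p : E) :
    Integrable (fun y => J y * exp (-⟪y, p⟫)) μ :=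
  (hJc.mul (continuous_exp.comp (continuous_id.inner continuous_const).neg))
    |>.integrable_of_hasCompactSupport hJsupp.mul_right

lemma exists_expMoment_le_integral_mul_exp [IsFiniteMeasureOnCompacts μ] (hJc : Continuous J)
    (hJnn : ∀ y, 0 ≤ J y) (hJsupp : HasCompactSupport J) :
    ∃ R > 0, ∀ p, expMoment μ J p ≤ (∫ y, J y ∂μ) * exp (R * ‖p‖) := by
  obtain ⟨R, hR, hJR⟩ := hJsupp.isBounded.subset_closedBall_lt 0 0
  refine ⟨R, hR, fun p => ?_⟩
  rw [← integral_mul_const]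
  refine integral_mono (integrable_mul_exp_neg_inner hJc hJsupp p)
    ((hJc.integrable_of_hasCompactSupport hJsupp).mul_const _) fun y => ?_
  by_cases hy : J y = 0
  · simp [hy]
  have hyR : ‖y‖ ≤ R := by simpa using hJR (subset_tsupport J hy)
  have : -⟪y, p⟫ ≤ R * ‖p‖ :=
    calc -⟪y, p⟫ ≤ ‖y‖ * ‖p‖ := (neg_le_abs _).trans (abs_real_inner_le_norm y p)
      _ ≤ R * ‖p‖ := by gcongr
  exact mul_le_mul_of_nonneg_left (exp_le_exp.mpr this) (hJnn y)

/-- The ball of radius `r / 4` around `y₀`, `‖y₀‖ ≤ r / 2`, pointing against `p`; its measure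
does not depend on `p` by translation invariance. -/
lemma exists_mul_exp_le_expMoment [ProperSpace E] [μ.IsAddHaarMeasure] (hJc : Continuous J)
    (hJnn : ∀ y, 0 ≤ J y) (hJsupp : HasCompactSupport J) {A r : ℝ} (hA : 0 < A) (hr : 0 < r)
    (hJA : ∀ y, ‖y‖ < r → A ≤ J y) :
    ∃ K > 0, ∃ k > 0, ∀ p, K * exp (k * ‖p‖) ≤ expMoment μ J p := by
  have hm : 0 < μ.real (ball 0 (r / 4)) :=
    ENNReal.toReal_pos (measure_ball_pos μ 0 (by positivity)).ne' measure_ball_lt_top.ne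
  refine ⟨A * μ.real (ball 0 (r / 4)), by positivity, r / 4, by positivity, fun p => ?_⟩
  obtain ⟨y₀, hy₀, hy₀p⟩ := exists_norm_le_inner_eq_neg_mul_norm (by positivity : 0 ≤ r / 2) p
  have hball : ∀ y ∈ ball y₀ (r / 4), A * exp (r / 4 * ‖p‖) ≤ J y * exp (-⟪y, p⟫) := by
    intro y hy
    rw [mem_ball, dist_eq_norm] at hy
    have hJy : A ≤ J y := hJA y <| by
      linarith [norm_le_norm_add_norm_sub' y y₀, norm_sub_rev y y₀]
    have hexp : r / 4 * ‖p‖ ≤ -⟪y, p⟫ := by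
      have := real_inner_le_norm (y - y₀) p
      rw [inner_sub_left, hy₀p] at this
      nlinarith [norm_nonneg p]
    exact mul_le_mul hJy (exp_le_exp.mpr hexp) (exp_pos _).le (hA.le.trans hJy)
  calc A * μ.real (ball 0 (r / 4)) * exp (r / 4 * ‖p‖)
      = ∫ _ in ball y₀ (r / 4), A * exp (r / 4 * ‖p‖) ∂μ := by
        rw [setIntegral_const, measureReal_def, measureReal_def, μ.addHaar_ball_center y₀,
          smul_eq_mul]
        ring
    _ ≤ ∫ y in ball y₀ (r / 4), J y * exp (-⟪y, p⟫) ∂μ :=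
        setIntegral_mono_on (integrableOn_const measure_ball_lt_top.ne)
          (integrable_mul_exp_neg_inner hJc hJsupp p).integrableOn measurableSet_ball hball
    _ ≤ expMoment μ J p :=
        setIntegral_le_integral (integrable_mul_exp_neg_inner hJc hJsupp p)
          (ae_of_all _ fun y => mul_nonneg (hJnn y) (exp_pos _).le)

end ExpMoment

section CellProblem

variable {E : Type*} [NormedAddCommGroup E] [InnerProductSpace ℝ E] [MeasureSpace E]
  (J c : E → ℝ) (Jbar : ℝ)

noncomputable def cellResidual (lam : ℝ) (q : E) (u : E → ℝ) (z : E) : ℝ :=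
  lam * u z + Jbar - (∫ y, J y * exp (-⟪y, q⟫) * exp (u (z - y) - u z)) - c z

lemma cellResidual_const (lam C : ℝ) (q z : E) :
    cellResidual J c Jbar lam q (fun _ => C) z = lam * C + Jbar - expMoment volume J q - c z := by
  simp [cellResidual, expMoment]

variable {J c Jbar}

lemma abs_mul_sub_expMoment_le_of_comparison {lam B : ℝ} {q : E} {v : E → ℝ} (hlam : 0 < lam)
    (hc : ∀ z, |c z| ≤ B) (hvc : Continuous v) (hvb : ∃ B, ∀ z, |v z| ≤ B)
    (hsol : ∀ z, cellResidual J c Jbar lam q v z = 0)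
    (hcomp : ∀ u w : E → ℝ, Continuous u → (∃ B, ∀ z, |u z| ≤ B) →
      Continuous w → (∃ B, ∀ z, |w z| ≤ B) →
      (∀ z, cellResidual J c Jbar lam q u z ≤ 0) → (∀ z, 0 ≤ cellResidual J c Jbar lam q w z) →
      ∀ z, u z ≤ w z)
    (z : E) : |lam * v z - (expMoment volume J q - Jbar)| ≤ B := by
  set M := expMoment volume J q - Jbar
  have hsub : (M - B) / lam ≤ v z :=
    hcomp _ v continuous_const ⟨_, fun _ => le_rfl⟩ hvc hvb
      (fun z' => by
        rw [cellResidual_const, mul_div_cancel₀ _ hlam.ne']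
        linarith [neg_abs_le (c z'), hc z'])
      (fun z' => (hsol z').ge) z
  have hsup : v z ≤ (M + B) / lam :=
    hcomp v _ hvc hvb continuous_const ⟨_, fun _ => le_rfl⟩ (fun z' => (hsol z').le)
      (fun z' => by
        rw [cellResidual_const, mul_div_cancel₀ _ hlam.ne']
        linarith [le_abs_self (c z'), hc z'])
      z
  rw [div_le_iff₀' hlam] at hsub
  rw [le_div_iff₀' hlam] at hsup
  exact abs_sub_le_iff.mpr ⟨by linarith, by linarith⟩

end CellProblem

lemma tendsto_atBot_of_le_neg_mul_exp {E : Type*} [Norm E] {H : E → ℝ} {K k C : ℝ} (hK : 0 < K)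
    (hk : 0 < k) (hH : ∀ p, H p ≤ -K * exp (k * ‖p‖) - C) :
    Tendsto H (comap norm atTop) atBot := by
  have hexp : Tendsto (fun x : ℝ => -K * exp (k * x) - C) atTop atBot := by
    simp_rw [sub_eq_add_neg]
    exact tendsto_atBot_add_const_right _ _
      ((tendsto_exp_atTop.comp (tendsto_id.const_mul_atTop hk)).const_mul_atTop_of_neg
        (neg_neg_of_pos hK))
  exact tendsto_atBot_mono hH (hexp.comp tendsto_comap)

theorem stmt14_general (n : ℕ) (J : EuclideanSpace ℝ (Fin n) → ℝ)
    (hJc : Continuous J) (hJnn : ∀ y, 0 ≤ J y) (hJsupp : HasCompactSupport J)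
    (A r₁ : ℝ) (hA : 0 < A) (hr₁ : 0 < r₁)
    (hJA : ∀ y, ‖y‖ < r₁ → A ≤ J y)
    (Jbar : ℝ) (hJbar : Jbar = ∫ y, J y)
    (c : EuclideanSpace ℝ (Fin n) → ℝ) (hcb : ∃ B, ∀ z, |c z| ≤ B)
    (v : ℝ → EuclideanSpace ℝ (Fin n) → EuclideanSpace ℝ (Fin n) → ℝ)
    (hvc : ∀ lam > (0:ℝ), ∀ q, Continuous (v lam q))
    (hvb : ∀ lam > (0:ℝ), ∀ q, ∃ B, ∀ z, |v lam q z| ≤ B)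
    (hsol : ∀ lam > (0:ℝ), ∀ q z, lam * v lam q z + Jbar -
        (∫ y, J y * Real.exp (-⟪y, q⟫) * Real.exp (v lam q (z - y) - v lam q z)) - c z = 0)
    (hcomp : ∀ lam > (0:ℝ), ∀ q : EuclideanSpace ℝ (Fin n),
      ∀ u w : EuclideanSpace ℝ (Fin n) → ℝ,
      Continuous u → (∃ B, ∀ z, |u z| ≤ B) → Continuous w → (∃ B, ∀ z, |w z| ≤ B) →
      (∀ z, lam * u z + Jbar -
          (∫ y, J y * Real.exp (-⟪y, q⟫) * Real.exp (u (z - y) - u z)) - c z ≤ 0) →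
      (∀ z, 0 ≤ lam * w z + Jbar -
          (∫ y, J y * Real.exp (-⟪y, q⟫) * Real.exp (w (z - y) - w z)) - c z) →
      ∀ z, u z ≤ w z)
    (Hbar : EuclideanSpace ℝ (Fin n) → ℝ)
    (hHbar : ∀ q, TendstoUniformly (fun lam z => lam * v lam q z)
      (fun _ => -Hbar q) (𝓝[>] (0:ℝ))) :
    (∃ K₁ > (0:ℝ), ∃ K₂ > (0:ℝ), ∃ K₃ > (0:ℝ), ∃ K₄ > (0:ℝ), ∃ C₁ C₂ : ℝ,
      ∀ p : EuclideanSpace ℝ (Fin n),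
        Hbar p ≤ -K₁ * Real.exp (K₂ * ‖p‖) - C₁ ∧
        -K₃ * Real.exp (K₄ * ‖p‖) - C₂ ≤ Hbar p) ∧
    Tendsto Hbar (Filter.comap norm Filter.atTop) Filter.atBot := by
  obtain ⟨B, hB⟩ := hcb
  obtain ⟨K, hK, k, hk, hlow⟩ := 
    exists_mul_exp_le_expMoment (μ := volume) hJc hJnn hJsupp hA hr₁ hJA
  obtain ⟨R, hR, hup⟩ := exists_expMoment_le_integral_mul_exp (μ := volume) hJc hJnn hJsupp
  have hJbar0 : 0 ≤ Jbar := hJbar ▸ integral_nonneg hJnn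
  have hlim : ∀ q, |-Hbar q - (expMoment volume J q - Jbar)| ≤ B := fun q =>
    le_of_tendsto (((hHbar q).tendsto_at 0).sub_const _).abs <|
      eventually_mem_nhdsWithin.mono fun lam hlam =>
        abs_mul_sub_expMoment_le_of_comparison hlam hB (hvc lam hlam q) (hvb lam hlam q)
          (hsol lam hlam q) (hcomp lam hlam q) 0
  have hupper : ∀ p, Hbar p ≤ -K * exp (k * ‖p‖) - (-(Jbar + B)) := fun p => by
    linarith [hlow p, (abs_le.mp (hlim p)).1]
  refine ⟨⟨K, hK, k, hk, Jbar + 1, by linarith, R, hR, -(Jbar + B), B - Jbar,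
    fun p => ⟨hupper p, ?_⟩⟩, tendsto_atBot_of_le_neg_mul_exp hK hk hupper⟩
  have := hup p
  rw [← hJbar] at this
  linarith [exp_pos (R * ‖p‖), (abs_le.mp (hlim p)).2]

theorem stmt14 (n : ℕ) (J : EuclideanSpace ℝ (Fin n) → ℝ)
    (hJc : Continuous J) (hJnn : ∀ y, 0 ≤ J y) (hJsupp : HasCompactSupport J)
    (hJsymm : ∀ y, J (-y) = J y)
    (A r₁ : ℝ) (hA : 0 < A) (hr₁ : 0 < r₁)
    (hJA : ∀ y, ‖y‖ < r₁ → A ≤ J y)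
    (Jbar : ℝ) (hJbar : Jbar = ∫ y, J y)
    (c : EuclideanSpace ℝ (Fin n) → ℝ) (hcb : ∃ B, ∀ z, |c z| ≤ B)
    (v : ℝ → EuclideanSpace ℝ (Fin n) → EuclideanSpace ℝ (Fin n) → ℝ)
    (hvc : ∀ lam > (0:ℝ), ∀ q, Continuous (v lam q))
    (hvb : ∀ lam > (0:ℝ), ∀ q, ∃ B, ∀ z, |v lam q z| ≤ B)
    (hsol : ∀ lam > (0:ℝ), ∀ q z, lam * v lam q z + Jbar -
        (∫ y, J y * Real.exp (-⟪y, q⟫) * Real.exp (v lam q (z - y) - v lam q z)) - c z = 0)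
    (hcomp : ∀ lam > (0:ℝ), ∀ q : EuclideanSpace ℝ (Fin n),
      ∀ u w : EuclideanSpace ℝ (Fin n) → ℝ,
      Continuous u → (∃ B, ∀ z, |u z| ≤ B) → Continuous w → (∃ B, ∀ z, |w z| ≤ B) →
      (∀ z, lam * u z + Jbar -
          (∫ y, J y * Real.exp (-⟪y, q⟫) * Real.exp (u (z - y) - u z)) - c z ≤ 0) →
      (∀ z, 0 ≤ lam * w z + Jbar -
          (∫ y, J y * Real.exp (-⟪y, q⟫) * Real.exp (w (z - y) - w z)) - c z) →
      ∀ z, u z ≤ w z)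
    (Hbar : EuclideanSpace ℝ (Fin n) → ℝ)
    (hHbar : ∀ q, TendstoUniformly (fun lam z => lam * v lam q z)
      (fun _ => -Hbar q) (𝓝[>] (0:ℝ))) :
    (∃ K₁ > (0:ℝ), ∃ K₂ > (0:ℝ), ∃ K₃ > (0:ℝ), ∃ K₄ > (0:ℝ), ∃ C₁ C₂ : ℝ,
      ∀ p : EuclideanSpace ℝ (Fin n),
        Hbar p ≤ -K₁ * Real.exp (K₂ * ‖p‖) - C₁ ∧
        -K₃ * Real.exp (K₄ * ‖p‖) - C₂ ≤ Hbar p) ∧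
    Tendsto Hbar (Filter.comap norm Filter.atTop) Filter.atBot :=
  stmt14_general n J hJc hJnn hJsupp A r₁ hA hr₁ hJA Jbar hJbar c hcb v hvc hvb hsol hcomp Hbar
    hHbar
end

section
/- Let A < B and suppose that for every ν > 0 there exist bounded Lipschitz functions v⁺_ν, v⁻_ν : ℝⁿ → ℝ such that for all z: J̄ - ∫J(y)e^{-y·p}exp(v⁺_ν(z-y) - v⁺_ν(z))dy - c(z) ≤ A + ν and J̄ - ∫J(y)e^{-y·p}exp(v⁻_ν(z-y) - v⁻_ν(z))dy - c(z) ≥ B - ν. Assuming the comparison principle holds for the equation εv + J̄ - ∫J(y)e^{-y·p}exp(v(z-y)-v(z))dy - c(z) = g(z) for bounded Lipschitz sub/supersolutions, this leads to a contradiction; hence the effective constant H̄(p) for which approximate correctors exist is unique (A = B). -/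
open MeasureTheory
open scoped RealInnerProductSpace

/-!
The Hamiltonian sees `v` only through the differences `v (z - y) - v z`, so a corrector may be
shifted by any constant. Shift the subcorrector of level `A + ν` above the supercorrector of level
`B - ν`; for small `ε` the zeroth-order terms `ε v` are so small that the constant `(A + B) / 2`
separates `ε v + H v` for the two functions. The comparison principle then puts the shifted
subcorrector below the supercorrector, which is absurd.
-/

section Comparison

variable {X : Type*} (Adm : (X → ℝ) → Prop) (F : (X → ℝ) → X → ℝ)

def ComparisonPrinciple : Prop :=
  ∀ ε > (0 : ℝ), ∀ u v g : X → ℝ, Adm u → Adm v →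
    (∀ z, ε * u z + F u z ≤ g z) → (∀ z, g z ≤ ε * v z + F v z) → ∀ z, u z ≤ v z

variable {Adm F}

theorem ComparisonPrinciple.le_of_sub_super [Nonempty X]
    (hcomp : ComparisonPrinciple Adm F)
    (hAdm : ∀ u (C : ℝ), Adm u → Adm fun z => u z + C)
    (hF : ∀ u (C : ℝ), F (fun z => u z + C) = F u)
    {u w : X → ℝ} {a b Mu Mw : ℝ} (hu : Adm u) (hw : Adm w)
    (hMu : ∀ z, |u z| ≤ Mu) (hMw : ∀ z, |w z| ≤ Mw)
    (hsub : ∀ z, F u z ≤ a) (hsup : ∀ z, b ≤ F w z) : b ≤ a := by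
  by_contra! hab
  obtain ⟨x⟩ := ‹Nonempty X›
  have hMu0 : 0 ≤ Mu := (abs_nonneg _).trans (hMu x)
  have hMw0 : 0 ≤ Mw := (abs_nonneg _).trans (hMw x)
  set C := Mu + Mw + 1
  set D := 2 * Mu + Mw + 1
  have hD : 0 < D := by positivity
  set ε := (b - a) / (2 * D)
  have hε : 0 < ε := div_pos (by linarith) (by positivity)
  have hεD : ε * D = (b - a) / 2 := by simp only [ε]; field_simp
  have hu_shift : ∀ z, ε * (u z + C) ≤ (b - a) / 2 := fun z => by
    have := (abs_le.mp (hMu z)).2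
    rw [← hεD]; gcongr; linarith
  have hw_small : ∀ z, -((b - a) / 2) ≤ ε * w z := fun z => by
    have := (abs_le.mp (hMw z)).1
    rw [← hεD, ← mul_neg]; gcongr; linarith
  have hle := hcomp ε hε (fun z => u z + C) w (fun _ => (a + b) / 2) (hAdm u C hu) hw
    (fun z => by rw [hF]; linarith [hu_shift z, hsub z])
    (fun z => by linarith [hw_small z, hsup z]) x
  linarith [(abs_le.mp (hMu x)).1, (abs_le.mp (hMw x)).2]

end Comparison

def IsBoundedLipschitz {X : Type*} [PseudoEMetricSpace X] (u : X → ℝ) : Prop :=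
  (∃ Bd, ∀ z, |u z| ≤ Bd) ∧ ∃ L : NNReal, LipschitzWith L u

theorem IsBoundedLipschitz.add_const {X : Type*} [PseudoEMetricSpace X] {u : X → ℝ}
    (hu : IsBoundedLipschitz u) (C : ℝ) : IsBoundedLipschitz fun z => u z + C := by
  obtain ⟨⟨Bd, hBd⟩, L, hL⟩ := hu
  refine ⟨⟨Bd + |C|, fun z => (abs_add_le _ _).trans (by linarith [hBd z])⟩, L, ?_⟩
  simpa using hL.add (LipschitzWith.const C)

section Hamiltonian

variable {E : Type*} [NormedAddCommGroup E] [InnerProductSpace ℝ E] [MeasureSpace E]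

noncomputable def nonlocalHamiltonian (J : E → ℝ) (Jbar : ℝ) (c : E → ℝ) (p : E)
    (v : E → ℝ) (z : E) : ℝ :=
  Jbar - (∫ y, J y * Real.exp (-⟪y, p⟫) * Real.exp (v (z - y) - v z)) - c z

theorem nonlocalHamiltonian_add_const (J : E → ℝ) (Jbar : ℝ) (c : E → ℝ) (p : E)
    (v : E → ℝ) (C : ℝ) :
    nonlocalHamiltonian J Jbar c p (fun z => v z + C) = nonlocalHamiltonian J Jbar c p v := by
  funext z
  simp only [nonlocalHamiltonian, add_sub_add_right_eq_sub]

end Hamiltonian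

theorem stmt19_general (n : ℕ) (J : EuclideanSpace ℝ (Fin n) → ℝ)
    (Jbar : ℝ)
    (c : EuclideanSpace ℝ (Fin n) → ℝ)
    (p : EuclideanSpace ℝ (Fin n))
    (A B : ℝ) (hAB : A < B)
    (vp vm : ℝ → EuclideanSpace ℝ (Fin n) → ℝ)
    (hvpb : ∀ ν > (0:ℝ), ∃ Bd, ∀ z, |vp ν z| ≤ Bd)
    (hvmb : ∀ ν > (0:ℝ), ∃ Bd, ∀ z, |vm ν z| ≤ Bd)
    (hvpl : ∀ ν > (0:ℝ), ∃ L : NNReal, LipschitzWith L (vp ν))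
    (hvml : ∀ ν > (0:ℝ), ∃ L : NNReal, LipschitzWith L (vm ν))
    (hvp : ∀ ν > (0:ℝ), ∀ z, Jbar -
        (∫ y, J y * Real.exp (-⟪y, p⟫) * Real.exp (vp ν (z - y) - vp ν z)) - c z ≤ A + ν)
    (hvm : ∀ ν > (0:ℝ), ∀ z, B - ν ≤ Jbar -
        (∫ y, J y * Real.exp (-⟪y, p⟫) * Real.exp (vm ν (z - y) - vm ν z)) - c z)
    (hcomp : ∀ ε > (0:ℝ), ∀ u v g : EuclideanSpace ℝ (Fin n) → ℝ,
      (∃ Bd, ∀ z, |u z| ≤ Bd) → (∃ L : NNReal, LipschitzWith L u) →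
      (∃ Bd, ∀ z, |v z| ≤ Bd) → (∃ L : NNReal, LipschitzWith L v) →
      (∀ z, ε * u z + Jbar -
          (∫ y, J y * Real.exp (-⟪y, p⟫) * Real.exp (u (z - y) - u z)) - c z ≤ g z) →
      (∀ z, g z ≤ ε * v z + Jbar -
          (∫ y, J y * Real.exp (-⟪y, p⟫) * Real.exp (v (z - y) - v z)) - c z) →
      ∀ z, u z ≤ v z) :
    False := by
  have hcomp' : ComparisonPrinciple IsBoundedLipschitz (nonlocalHamiltonian J Jbar c p) :=
    fun ε hε u v g hu hv hsub hsup =>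
      hcomp ε hε u v g hu.1 hu.2 hv.1 hv.2
        (fun z => by simpa only [nonlocalHamiltonian, add_sub_assoc] using hsub z)
        (fun z => by simpa only [nonlocalHamiltonian, add_sub_assoc] using hsup z)
  set ν := (B - A) / 4 with hν_def
  have hν : 0 < ν := by positivity
  obtain ⟨Mp, hMp⟩ := hvpb ν hν
  obtain ⟨Mm, hMm⟩ := hvmb ν hν
  have hBA := hcomp'.le_of_sub_super (fun u C hu => hu.add_const C)
    (nonlocalHamiltonian_add_const J Jbar c p) ⟨⟨Mp, hMp⟩, hvpl ν hν⟩ ⟨⟨Mm, hMm⟩, hvml ν hν⟩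
    hMp hMm (hvp ν hν) (hvm ν hν)
  linarith

theorem stmt19 (n : ℕ) (J : EuclideanSpace ℝ (Fin n) → ℝ)
    (hJc : Continuous J) (hJnn : ∀ y, 0 ≤ J y) (hJsupp : HasCompactSupport J)
    (Jbar : ℝ) (hJbar : Jbar = ∫ y, J y)
    (c : EuclideanSpace ℝ (Fin n) → ℝ) (hcc : Continuous c) (hcb : ∃ B, ∀ z, |c z| ≤ B)
    (p : EuclideanSpace ℝ (Fin n))
    (A B : ℝ) (hAB : A < B)
    (vp vm : ℝ → EuclideanSpace ℝ (Fin n) → ℝ)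
    (hvpb : ∀ ν > (0:ℝ), ∃ Bd, ∀ z, |vp ν z| ≤ Bd)
    (hvmb : ∀ ν > (0:ℝ), ∃ Bd, ∀ z, |vm ν z| ≤ Bd)
    (hvpl : ∀ ν > (0:ℝ), ∃ L : NNReal, LipschitzWith L (vp ν))
    (hvml : ∀ ν > (0:ℝ), ∃ L : NNReal, LipschitzWith L (vm ν))
    (hvp : ∀ ν > (0:ℝ), ∀ z, Jbar -
        (∫ y, J y * Real.exp (-⟪y, p⟫) * Real.exp (vp ν (z - y) - vp ν z)) - c z ≤ A + ν)
    (hvm : ∀ ν > (0:ℝ), ∀ z, B - ν ≤ Jbar -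
        (∫ y, J y * Real.exp (-⟪y, p⟫) * Real.exp (vm ν (z - y) - vm ν z)) - c z)
    (hcomp : ∀ ε > (0:ℝ), ∀ u v g : EuclideanSpace ℝ (Fin n) → ℝ,
      (∃ Bd, ∀ z, |u z| ≤ Bd) → (∃ L : NNReal, LipschitzWith L u) →
      (∃ Bd, ∀ z, |v z| ≤ Bd) → (∃ L : NNReal, LipschitzWith L v) →
      (∀ z, ε * u z + Jbar -
          (∫ y, J y * Real.exp (-⟪y, p⟫) * Real.exp (u (z - y) - u z)) - c z ≤ g z) →
      (∀ z, g z ≤ ε * v z + Jbar -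
          (∫ y, J y * Real.exp (-⟪y, p⟫) * Real.exp (v (z - y) - v z)) - c z) →
      ∀ z, u z ≤ v z) :
    False :=
  stmt19_general n J Jbar c p A B hAB vp vm hvpb hvmb hvpl hvml hvp hvm hcomp
end
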